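/- arXiv:1406.2050 — 3 statements merged into one kernel-verified Lean document; each statement's English description precedes it below -/
import Mathlib

section
/- Let m and k be positive integers with k ≥ 2, and let H be any graph obtained from the complete graph K_m by deleting exactly k−2 edges. Then R̄(m;k) ≤ R(H;k). -/
open Finset

/-- The color-`i` graph `f⁻¹(i)` of an edge `k`-coloring `f` of the complete
graph on `Fin n`. -/
def colorGraph {n k : ℕ} (f : Sym2 (Fin n) → Fin k) (i : Fin k) :
    SimpleGraph (Fin n) where
  Adj x y := x ≠ y ∧ f s(x, y) = i
  symm := by
    constructor
    rintro x y ⟨hxy, hf⟩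
    exact ⟨hxy.symm, by rwa [Sym2.eq_swap]⟩
  loopless := by constructor; rintro x ⟨h, -⟩; exact h rfl

/-- `α_i(f) ≥ m` : the graph `f⁻¹(i)` has an independent set of size `m`. -/
def HasIndep {n k : ℕ} (f : Sym2 (Fin n) → Fin k) (i : Fin k) (m : ℕ) : Prop :=
  ∃ s : Finset (Fin n), s.card = m ∧ ∀ x ∈ s, ∀ y ∈ s, x ≠ y → f s(x, y) ≠ i

/-- `ω_i(f) ≥ m` : the graph `f⁻¹(i)` has a clique of size `m`. -/
def HasClique {n k : ℕ} (f : Sym2 (Fin n) → Fin k) (i : Fin k) (m : ℕ) : Prop :=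
  ∃ s : Finset (Fin n), s.card = m ∧ ∀ x ∈ s, ∀ y ∈ s, x ≠ y → f s(x, y) = i

/-- The complementary Ramsey number `R̄(m 0, …, m (k-1))`: the least `n` such
that every edge `k`-coloring of `K_n` admits a color `i` with `α_i(f) ≥ m i`. -/
noncomputable def cRamsey {k : ℕ} (m : Fin k → ℕ) : ℕ :=
  sInf {n : ℕ | ∀ f : Sym2 (Fin n) → Fin k, ∃ i : Fin k, HasIndep f i (m i)}

/-- `R̄(m; k)`, i.e. `R̄(m, …, m)` with `m` repeated `k` times. -/
noncomputable def cRamseyU (m k : ℕ) : ℕ := cRamsey (fun _ : Fin k => m)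

/-- The classical multicolor Ramsey number `R(m 0, …, m (k-1))`. -/
noncomputable def ramsey {k : ℕ} (m : Fin k → ℕ) : ℕ :=
  sInf {n : ℕ | ∀ f : Sym2 (Fin n) → Fin k, ∃ i : Fin k, HasClique f i (m i)}

/-- `G` is the disjoint union of `r` copies of `K_{q+1}` and `n - r` copies of
`K_q`: there is a partition of the vertices into `n` parts, `r` of size `q+1`
and `n - r` of size `q`, with two vertices adjacent iff they are distinct and
lie in a common part. -/
def IsCliquePartition {N : ℕ} (G : SimpleGraph (Fin N)) (n q r : ℕ) : Prop :=
  ∃ P : Fin N → Fin n,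
    (∀ x y, G.Adj x y ↔ x ≠ y ∧ P x = P y) ∧
    ∀ j : Fin n,
      (Finset.univ.filter (fun x => P x = j)).card = if (j : ℕ) < r then q + 1 else q

/-- The family `H` of spanning subgraphs is a factorization of the complete
graph: every edge of `K_N` lies in exactly one of the `H i`. -/
def IsFactorization {N k : ℕ} (H : Fin k → SimpleGraph (Fin N)) : Prop :=
  ∀ x y : Fin N, x ≠ y → ∃! i : Fin k, (H i).Adj x y

/-- `f_i(x)`: the number of vertices `y ≠ x` with `f({x, y}) = i`. -/
def degColor {n k : ℕ} (f : Sym2 (Fin n) → Fin k) (i : Fin k) (x : Fin n) : ℕ :=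
  (Finset.univ.filter (fun y => y ≠ x ∧ f s(x, y) = i)).card

/-- `t̄_n(m)`: the number of edges of `T̄_n(m) = r K_{q+1} ∪ (n-r) K_q`, where
`m = n * q + r` with `0 ≤ r < n`. -/
def tbar (n m : ℕ) : ℕ :=
  (m % n) * Nat.choose (m / n + 1) 2 + (n - m % n) * Nat.choose (m / n) 2

/-- The generalized Ramsey number `R(H; k)`: the least `n` such that every
edge `k`-coloring of `K_n` has a color class containing a subgraph
isomorphic to `H`. -/
noncomputable def graphRamsey {m : ℕ} (H : SimpleGraph (Fin m)) (k : ℕ) : ℕ :=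
  sInf {n : ℕ | ∀ f : Sym2 (Fin n) → Fin k, ∃ i : Fin k,
    ∃ φ : Fin m → Fin n, Function.Injective φ ∧
      ∀ x y, H.Adj x y → (colorGraph f i).Adj (φ x) (φ y)}

/-!
Colour `K_n` with `n = R(H; k)` and take a copy of `H` in a single colour `j`. On its `m`
vertices every edge of `H` has colour `j`, and the `k - 2` non-edges of `H` carry at most
`k - 2` further colours, so some colour is missing from this `K_m`: it is an independent
`m`-set in that colour. Since `R(H; k)` is an `sInf` (junk value `0` on the empty set),
a finite Ramsey theorem is needed to know that `n` itself has the defining property.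
-/

open Function

/-- The greedy step of the Erdős–Szekeres proof of Ramsey's theorem. -/
lemma exists_injective_seq_color_eq_of_lt {V α : Type*} [DecidableEq V] [Fintype α]
    [Nonempty α] (f : Sym2 V → α) :
    ∀ (t : ℕ) (A : Finset V), (Fintype.card α + 1) ^ t ≤ #A →
      ∃ (v : Fin t → V) (c : Fin t → α), Injective v ∧ (∀ i, v i ∈ A) ∧
        ∀ i j, i < j → f s(v i, v j) = c i := by
  intro t
  induction t with
  | zero => exact fun _ _ => ⟨Fin.elim0, Fin.elim0, fun i => i.elim0, fun i => i.elim0,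
      fun i => i.elim0⟩
  | succ t ih =>
    intro A hA
    classical
    have hpos : 0 < (Fintype.card α + 1) ^ t := by positivity
    obtain ⟨a, ha⟩ : A.Nonempty := by
      rw [← card_pos]
      exact lt_of_lt_of_le (by positivity) hA
    have hfiber : #(univ : Finset α) * (Fintype.card α + 1) ^ t ≤ #(A.erase a) := by
      have hsplit : (Fintype.card α + 1) ^ (t + 1) =
          Fintype.card α * (Fintype.card α + 1) ^ t + (Fintype.card α + 1) ^ t := by ring
      rw [card_univ, card_erase_of_mem ha]
      omega
    obtain ⟨c₀, -, hc₀⟩ := exists_le_card_fiber_of_mul_le_card_of_maps_to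
      (f := fun y => f s(a, y)) (fun _ _ => mem_univ _) univ_nonempty hfiber
    obtain ⟨v, c, hv, hvA, hvc⟩ := ih _ hc₀
    simp only [mem_filter, mem_erase] at hvA
    refine ⟨Fin.cons a v, Fin.cons c₀ c, ?_, ?_, ?_⟩
    · exact Fin.cons_injective_iff.mpr ⟨fun ⟨i, hi⟩ => (hvA i).1.1 hi, hv⟩
    · exact Fin.cases ha fun i => (hvA i).1.2
    · intro i j hij
      obtain ⟨j, rfl⟩ := Fin.exists_succ_eq.mpr (Fin.ne_zero_of_lt hij)
      cases i using Fin.cases with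
      | zero => exact (hvA j).2
      | succ i => exact hvc i j (Fin.succ_lt_succ_iff.mp hij)

lemma exists_forall_hasClique (m k : ℕ) [NeZero k] :
    ∃ N, ∀ f : Sym2 (Fin N) → Fin k, ∃ i, HasClique f i m := by
  set t := k * (m - 1) + 1
  refine ⟨(k + 1) ^ t, fun f => ?_⟩
  obtain ⟨v, c, hv, -, hvc⟩ :=
    exists_injective_seq_color_eq_of_lt f t univ (by simp)
  -- Pigeonhole: some colour `i` occurs among `c` at least `m` times.
  obtain ⟨i, hi⟩ := Fintype.exists_lt_card_fiber_of_mul_lt_card (f := c) (n := m - 1)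
    (by simp only [Fintype.card_fin]; omega)
  obtain ⟨T, hTi, hTm⟩ := exists_subset_card_eq (show m ≤ #{x | c x = i} by omega)
  refine ⟨i, T.map ⟨v, hv⟩, by rw [card_map, hTm], ?_⟩
  simp only [mem_map, Embedding.coeFn_mk]
  rintro _ ⟨a, ha, rfl⟩ _ ⟨b, hb, rfl⟩ hab
  have hc : ∀ x ∈ T, c x = i := fun x hx => (mem_filter.mp (hTi hx)).2
  rcases lt_or_gt_of_ne (ne_of_apply_ne v hab) with h | h
  · rw [hvc a b h, hc a ha]
  · rw [Sym2.eq_swap, hvc b a h, hc b hb]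

lemma exists_colorGraph_copy_of_hasClique {n m k : ℕ} {f : Sym2 (Fin n) → Fin k} {i : Fin k}
    (H : SimpleGraph (Fin m)) (h : HasClique f i m) :
    ∃ φ : Fin m → Fin n, Injective φ ∧ ∀ x y, H.Adj x y → (colorGraph f i).Adj (φ x) (φ y) := by
  obtain ⟨s, hs, hclique⟩ := h
  let e := s.equivFinOfCardEq hs
  refine ⟨fun x => e.symm x, fun x y hxy => e.symm.injective (Subtype.ext hxy),
    fun x y hxy => ?_⟩
  have hne : (e.symm x : Fin n) ≠ e.symm y := fun h => hxy.ne (e.symm.injective (Subtype.ext h))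
  exact ⟨hne, hclique _ (e.symm x).2 _ (e.symm y).2 hne⟩

lemma exists_colorGraph_copy_of_graphRamsey {m k : ℕ} [NeZero k] (H : SimpleGraph (Fin m))
    (f : Sym2 (Fin (graphRamsey H k)) → Fin k) :
    ∃ i, ∃ φ : Fin m → Fin (graphRamsey H k), Injective φ ∧
      ∀ x y, H.Adj x y → (colorGraph f i).Adj (φ x) (φ y) := by
  refine Nat.sInf_mem (s := {n | ∀ f : Sym2 (Fin n) → Fin k, _}) ?_ f
  obtain ⟨N, hN⟩ := exists_forall_hasClique m k
  exact ⟨N, fun f => (hN f).imp fun i => exists_colorGraph_copy_of_hasClique H⟩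

lemma SimpleGraph.card_edgeFinset_add_card_edgeFinset_compl {V : Type*} [Fintype V]
    [DecidableEq V] (G : SimpleGraph V) [DecidableRel G.Adj] :
    #G.edgeFinset + #Gᶜ.edgeFinset = (Fintype.card V).choose 2 := by
  rw [← card_union_of_disjoint (SimpleGraph.disjoint_edgeFinset.mpr disjoint_compl_right),
    ← SimpleGraph.edgeFinset_sup, ← SimpleGraph.card_edgeFinset_top_eq_card_choose_two]
  congr 1
  ext e
  simp only [SimpleGraph.mem_edgeFinset, sup_compl_eq_top]

lemma exists_hasIndep_of_copy {n m k : ℕ} (f : Sym2 (Fin n) → Fin k) (H : SimpleGraph (Fin m))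
    [DecidableRel H.Adj] {φ : Fin m → Fin n} (hφ : Injective φ) {j : Fin k}
    (hcopy : ∀ x y, H.Adj x y → f s(φ x, φ y) = j) (hk : #Hᶜ.edgeFinset + 1 < k) :
    ∃ c, HasIndep f c m := by
  set used := insert j (Hᶜ.edgeFinset.image fun e => f (e.map φ))
  have hused : ∀ x y, x ≠ y → f s(φ x, φ y) ∈ used := by
    intro x y hxy
    by_cases hH : H.Adj x y
    · exact hcopy x y hH ▸ mem_insert_self _ _
    · exact mem_insert_of_mem (mem_image.mpr ⟨s(x, y), by simpa using ⟨hxy, hH⟩, rfl⟩)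
  obtain ⟨c, -, hc⟩ : ∃ c ∈ (univ : Finset (Fin k)), c ∉ used := by
    refine exists_mem_notMem_of_card_lt_card ?_
    calc #used ≤ #Hᶜ.edgeFinset + 1 := (card_insert_le _ _).trans (by grw [card_image_le])
      _ < #(univ : Finset (Fin k)) := by simpa using hk
  refine ⟨c, univ.map ⟨φ, hφ⟩, by simp, ?_⟩
  simp only [mem_map, Embedding.coeFn_mk]
  rintro _ ⟨x, -, rfl⟩ _ ⟨y, -, rfl⟩ hxy hfc
  exact hc (hfc ▸ hused x y (ne_of_apply_ne φ hxy))

theorem cRamseyU_le_graphRamsey_general (m k : ℕ) (hk : 2 ≤ k)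
    (H : SimpleGraph (Fin m))
    (hH : H.edgeSet.ncard + (k - 2) = m.choose 2) :
    cRamseyU m k ≤ graphRamsey H k := by
  classical
  have : NeZero k := ⟨by omega⟩
  have hcompl : #Hᶜ.edgeFinset = k - 2 := by
    have := H.card_edgeFinset_add_card_edgeFinset_compl
    rw [← H.coe_edgeFinset, Set.ncard_coe_finset] at hH
    rw [Fintype.card_fin] at this
    omega
  refine Nat.sInf_le fun f => ?_
  obtain ⟨j, φ, hφ, hcopy⟩ := exists_colorGraph_copy_of_graphRamsey H f
  exact exists_hasIndep_of_copy f H hφ (fun x y hxy => (hcopy x y hxy).2) (by omega)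

/-- If `H` is obtained from `K_m` by deleting exactly `k - 2` edges, then
`R̄(m; k) ≤ R(H; k)`. -/
theorem cRamseyU_le_graphRamsey (m k : ℕ) (hm : 0 < m) (hk : 2 ≤ k)
    (H : SimpleGraph (Fin m))
    (hH : H.edgeSet.ncard + (k - 2) = m.choose 2) :
    cRamseyU m k ≤ graphRamsey H k :=
  cRamseyU_le_graphRamsey_general m k hk H hH
end

section
/- Let m₁, m₂, m₃ and n be positive integers greater than 2. Then R̄(m₁,m₂,m₃) ≤ n if and only if for any two Ramsey (m₃,m₂)-graphs G and H on the vertex set {1,…,n} such that H is a subgraph of G, the graph G∖H (the graph on {1,…,n} whose edge set is E(G)∖E(H)) satisfies α(G∖H) ≥ m₁. -/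
open Finset

/-- A Ramsey `(s, t)`-graph: `ω(G) < s` and `α(G) < t`. -/
def IsRamseyGraph {n : ℕ} (s t : ℕ) (G : SimpleGraph (Fin n)) : Prop :=
  G.CliqueFree s ∧ Gᶜ.CliqueFree t

/-!
A 3-coloring of `K_n` is the same thing as a nested pair `H ≤ G` of graphs: color 1 is `H`,
color 0 is `G \ H` and color 2 is `Gᶜ`. Then `α_2 < m₃` says `ω(G) < m₃` and `α_1 < m₂` says
`α(H) < m₂`, and because `H ≤ G` these two conditions already make both `G` and `H` Ramsey
`(m₃, m₂)`-graphs. So "every coloring has some `α_i ≥ m_i`" is exactly the graph condition.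
Finite Ramsey's theorem makes the set defining `R̄` nonempty, and that property is monotone
in `n`, so `R̄ ≤ n` is equivalent to it holding at `n`.
-/

namespace SimpleGraph

variable {V : Type*}

theorem not_indepSetFree_iff (G : SimpleGraph V) (m : ℕ) :
    ¬G.IndepSetFree m ↔ ∃ s : Finset V, #s = m ∧ ∀ x ∈ s, ∀ y ∈ s, x ≠ y → ¬G.Adj x y := by
  simp [IndepSetFree, isNIndepSet_iff, isIndepSet_iff, Set.Pairwise, and_comm]

theorem exists_isNClique_or_isNIndepSet_of_choose_le (G : SimpleGraph V) (a b : ℕ)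
    (s : Finset V) (hs : (a + b).choose a ≤ #s) :
    (∃ t ⊆ s, G.IsNClique a t) ∨ ∃ t ⊆ s, G.IsNIndepSet b t := by
  classical
  induction a generalizing b s with
  | zero => exact .inl ⟨∅, empty_subset s, by simp⟩
  | succ a iha =>
    induction b generalizing s with
    | zero => exact .inr ⟨∅, empty_subset s, by simp [isNIndepSet_iff]⟩
    | succ b ihb =>
      obtain ⟨v, hv⟩ : s.Nonempty := card_pos.mp ((Nat.choose_pos (by omega)).trans_le hs)
      set A := (s.erase v).filter (G.Adj v)
      set B := (s.erase v).filter (fun w => ¬G.Adj v w)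
      have hAs : A ⊆ s := (filter_subset _ _).trans (erase_subset _ _)
      have hBs : B ⊆ s := (filter_subset _ _).trans (erase_subset _ _)
      have hAB : #A + #B + 1 = #s := by
        rw [card_filter_add_card_filter_not, card_erase_add_one hv]
      rw [show a + 1 + (b + 1) = a + 1 + b + 1 by omega, Nat.choose_succ_succ'] at hs
      -- Pascal's rule: one side of the split at `v` is large enough for the induction.
      obtain hA | hB : (a + (b + 1)).choose a ≤ #A ∨ (a + 1 + b).choose (a + 1) ≤ #B := by
        rw [show a + (b + 1) = a + 1 + b by omega]
        omega
      · rcases iha (b + 1) A hA with ⟨t, htA, ht⟩ | ⟨t, htA, ht⟩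
        · refine .inl ⟨insert v t, insert_subset hv (htA.trans hAs), ht.insert ?_⟩
          exact fun w hw => (mem_filter.mp (htA hw)).2
        · exact .inr ⟨t, htA.trans hAs, ht⟩
      · rcases ihb B hB with ⟨t, htB, ht⟩ | ⟨t, htB, ht⟩
        · exact .inl ⟨t, htB.trans hBs, ht⟩
        · refine .inr ⟨insert v t, insert_subset hv (htB.trans hBs), ?_⟩
          rw [← isNClique_compl] at ht ⊢
          refine ht.insert fun w hw => ?_
          obtain ⟨hwv, hvw⟩ := mem_filter.mp (htB hw)
          exact ⟨(ne_of_mem_erase hwv).symm, hvw⟩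

end SimpleGraph

open SimpleGraph

theorem isRamseyGraph_of_le {n s t : ℕ} {G H : SimpleGraph (Fin n)} (hHG : H ≤ G)
    (hG : G.CliqueFree s) (hH : H.IndepSetFree t) :
    IsRamseyGraph s t G ∧ IsRamseyGraph s t H :=
  have hHc : Hᶜ.CliqueFree t := H.cliqueFree_compl.mpr hH
  ⟨⟨hG, hHc.anti (compl_le_compl hHG)⟩, ⟨hG.anti hHG, hHc⟩⟩

section Coloring

variable {n k : ℕ}

theorem hasIndep_iff_not_indepSetFree (f : Sym2 (Fin n) → Fin k) (i : Fin k) (m : ℕ) :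
    HasIndep f i m ↔ ¬(colorGraph f i).IndepSetFree m := by
  rw [not_indepSetFree_iff]
  simp [HasIndep, colorGraph]

theorem colorGraph_le_compl_colorGraph (f : Sym2 (Fin n) → Fin k) {i j : Fin k} (hij : i ≠ j) :
    colorGraph f i ≤ (colorGraph f j)ᶜ :=
  fun _ _ h => ⟨h.1, fun h' => hij (h.2.symm.trans h'.2)⟩

theorem HasIndep.of_comp_map {p q : ℕ} {f : Sym2 (Fin q) → Fin k} (e : Fin p ↪ Fin q)
    {i : Fin k} {m : ℕ} (h : HasIndep (f ∘ Sym2.map e) i m) : HasIndep f i m := by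
  obtain ⟨s, hcard, hind⟩ := h
  refine ⟨s.map e, by rw [card_map, hcard], ?_⟩
  simp only [mem_map]
  rintro _ ⟨x, hx, rfl⟩ _ ⟨y, hy, rfl⟩ hxy
  simpa using hind x hx y hy (ne_of_apply_ne e hxy)

def IndepArrows (n : ℕ) (m : Fin k → ℕ) : Prop :=
  ∀ f : Sym2 (Fin n) → Fin k, ∃ i, HasIndep f i (m i)

theorem IndepArrows.mono {p q : ℕ} (hpq : p ≤ q) {m : Fin k → ℕ} (h : IndepArrows p m) :
    IndepArrows q m := fun f =>
  let ⟨i, hi⟩ := h (f ∘ Sym2.map (Fin.castLEEmb hpq))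
  ⟨i, hi.of_comp_map _⟩

theorem indepArrows_of_choose_le {m : Fin k → ℕ} {i j : Fin k} (hij : i ≠ j)
    (hn : (m i + m j).choose (m i) ≤ n) : IndepArrows n m := by
  intro f
  rcases (colorGraph f j).exists_isNClique_or_isNIndepSet_of_choose_le (m i) (m j) univ
    (by rwa [card_univ, Fintype.card_fin]) with ⟨t, -, ht⟩ | ⟨t, -, ht⟩
  · refine ⟨i, (hasIndep_iff_not_indepSetFree f i _).mpr fun hfree => hfree t ?_⟩
    exact (isNClique_compl _).mp (ht.mono (colorGraph_le_compl_colorGraph f hij.symm))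
  · exact ⟨j, (hasIndep_iff_not_indepSetFree f j _).mpr fun hfree => hfree t ht⟩

theorem cRamsey_le_iff_indepArrows {m : Fin k → ℕ} {i j : Fin k} (hij : i ≠ j) :
    cRamsey m ≤ n ↔ IndepArrows n m := by
  refine ⟨fun h => ?_, fun h => Nat.sInf_le h⟩
  have hne : {N | IndepArrows N m}.Nonempty := ⟨_, indepArrows_of_choose_le hij le_rfl⟩
  exact IndepArrows.mono h (Nat.sInf_mem hne)

end Coloring

section NestedPair

variable {n : ℕ}

open Classical in
noncomputable def nestedColoring (G H : SimpleGraph (Fin n)) : Sym2 (Fin n) → Fin 3 :=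
  fun e => if e ∈ H.edgeSet then 1 else if e ∈ G.edgeSet then 0 else 2

theorem colorGraph_nestedColoring_zero (G H : SimpleGraph (Fin n)) :
    colorGraph (nestedColoring G H) 0 = G \ H := by
  ext x y
  by_cases hH : H.Adj x y <;> by_cases hG : G.Adj x y <;>
    simp [colorGraph, nestedColoring, hH, hG, G.ne_of_adj]

theorem colorGraph_nestedColoring_one (G H : SimpleGraph (Fin n)) :
    colorGraph (nestedColoring G H) 1 = H := by
  ext x y
  by_cases hH : H.Adj x y <;> by_cases hG : G.Adj x y <;>
    simp [colorGraph, nestedColoring, hH, hG, H.ne_of_adj]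

theorem colorGraph_nestedColoring_two {G H : SimpleGraph (Fin n)} (hHG : H ≤ G) :
    colorGraph (nestedColoring G H) 2 = Gᶜ := by
  ext x y
  by_cases hG : G.Adj x y
  · by_cases hH : H.Adj x y <;> simp [colorGraph, nestedColoring, hH, hG, G.ne_of_adj]
  · have hH : ¬H.Adj x y := fun h => hG (hHG h)
    simp [colorGraph, nestedColoring, hH, hG]

theorem compl_colorGraph_two_sdiff_colorGraph_one (f : Sym2 (Fin n) → Fin 3) :
    (colorGraph f 2)ᶜ \ colorGraph f 1 = colorGraph f 0 := by
  ext x y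
  simp only [colorGraph, sdiff_adj, compl_adj]
  generalize f s(x, y) = c
  fin_cases c <;> simp

end NestedPair

theorem cRamsey_le_iff_ramseyGraphs_general (m₁ m₂ m₃ n : ℕ) :
    cRamsey ![m₁, m₂, m₃] ≤ n ↔
      ∀ G H : SimpleGraph (Fin n), H ≤ G →
        IsRamseyGraph m₃ m₂ G → IsRamseyGraph m₃ m₂ H →
        ∃ s : Finset (Fin n), s.card = m₁ ∧
          ∀ x ∈ s, ∀ y ∈ s, x ≠ y → ¬(G \ H).Adj x y := by
  simp only [cRamsey_le_iff_indepArrows (show (0 : Fin 3) ≠ 1 by decide), IndepArrows,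
    hasIndep_iff_not_indepSetFree, ← not_indepSetFree_iff]
  constructor
  · intro hArrows G H hHG hG hH
    obtain ⟨i, hi⟩ := hArrows (nestedColoring G H)
    fin_cases i
    · simpa [colorGraph_nestedColoring_zero] using hi
    · exact absurd (H.cliqueFree_compl.mp hH.2) (by simpa [colorGraph_nestedColoring_one] using hi)
    · exact absurd hG.1 (by simpa [colorGraph_nestedColoring_two hHG] using hi)
  · intro hGraphs f
    by_contra! hfree
    have hHG := colorGraph_le_compl_colorGraph f (show (1 : Fin 3) ≠ 2 by decide)
    obtain ⟨hG, hH⟩ :=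
      isRamseyGraph_of_le hHG ((colorGraph f 2).cliqueFree_compl.mpr (hfree 2)) (hfree 1)
    exact hGraphs _ _ hHG hG hH (compl_colorGraph_two_sdiff_colorGraph_one f ▸ hfree 0)

/-- For integers `m₁, m₂, m₃, n > 2`: `R̄(m₁, m₂, m₃) ≤ n` iff for any two
Ramsey `(m₃, m₂)`-graphs `G ⊇ H` on `[n]`, one has `α(G \ H) ≥ m₁`. -/
theorem cRamsey_le_iff_ramseyGraphs (m₁ m₂ m₃ n : ℕ)
    (h₁ : 2 < m₁) (h₂ : 2 < m₂) (h₃ : 2 < m₃) (hn : 2 < n) :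
    cRamsey ![m₁, m₂, m₃] ≤ n ↔
      ∀ G H : SimpleGraph (Fin n), H ≤ G →
        IsRamseyGraph m₃ m₂ G → IsRamseyGraph m₃ m₂ H →
        ∃ s : Finset (Fin n), s.card = m₁ ∧
          ∀ x ∈ s, ∀ y ∈ s, x ≠ y → ¬(G \ H).Adj x y :=
  cRamsey_le_iff_ramseyGraphs_general m₁ m₂ m₃ n
end

section
/- Let k, m, n be positive integers with m ≥ 3, and suppose k · t̄_{m−1}(n) > n(n−1)/2. Then R̄(m;k) ≤ n. -/
open Finset

/-! If no colour class `f⁻¹(i)` had an independent set of size `m`, every complement `f⁻¹(i)ᶜ`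
would be `K_m`-free, so by Turán's theorem it would have at most as many edges as the Turán
graph `T(n, m - 1)`. Hence every colour class would have at least `t̄_{m-1}(n)` edges, the number
of non-edges of `T(n, m - 1)`, and the `k` colour classes, which partition the `n(n-1)/2` edges
of `K_n`, would have more than `n(n-1)/2` edges in total. -/

open SimpleGraph

namespace SimpleGraph

lemma card_edgeFinset_add_card_edgeFinset_compl_s8 {V : Type*} [Fintype V] [DecidableEq V]
    (G : SimpleGraph V) [DecidableRel G.Adj] :
    #G.edgeFinset + #Gᶜ.edgeFinset = (Fintype.card V).choose 2 := by
  rw [← card_union_of_disjoint (disjoint_edgeFinset.2 disjoint_compl_right), ← edgeFinset_sup]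
  convert card_edgeFinset_top_eq_card_choose_two (V := V)
  exact sup_compl_eq_top

end SimpleGraph

lemma tbar_add_card_edgeFinset_turanGraph (r n : ℕ) :
    tbar r n + #(turanGraph n r).edgeFinset = n.choose 2 := by
  rw [card_edgeFinset_turanGraph, tbar]
  rcases r.eq_zero_or_pos with rfl | hr
  · simp
  have hs : n % r < r := Nat.mod_lt n hr
  have hn : n = r * (n / r) + n % r := (Nat.div_add_mod n r).symm
  generalize n / r = q, n % r = s at hs hn ⊢
  subst hn
  have h2 : 2 * r.choose 2 = r * (r - 1) := by
    rw [Nat.choose_two_right, Nat.mul_div_cancel' (Nat.even_mul_pred_self r).two_dvd]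
  have hdiv : ((r * q + s) ^ 2 - s ^ 2) * (r - 1) / (2 * r) =
      r.choose 2 * q ^ 2 + q * s * (r - 1) := by
    refine Nat.div_eq_of_eq_mul_left (by positivity) ?_
    rw [show (r * q + s) ^ 2 - s ^ 2 = r * q * (r * q + 2 * s) by
      rw [Nat.sub_eq_of_eq_add]; ring]
    calc r * q * (r * q + 2 * s) * (r - 1)
        = (r * (r - 1)) * q ^ 2 * r + q * s * (r - 1) * (2 * r) := by ring
      _ = _ := by rw [← h2]; ring
  rw [hdiv]
  qify [hs.le, hr]
  push_cast [Nat.cast_choose_two]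
  ring

lemma tbar_le_card_edgeFinset_of_cliqueFree_compl {V : Type*} [Fintype V] [DecidableEq V]
    {G : SimpleGraph V} [DecidableRel G.Adj] {r : ℕ} (h : Gᶜ.CliqueFree (r + 1)) :
    tbar r (Fintype.card V) ≤ #G.edgeFinset := by
  have hturan : #Gᶜ.edgeFinset ≤ #(turanGraph (Fintype.card V) r).edgeFinset := by
    rw [card_edgeFinset_turanGraph]
    exact h.card_edgeFinset_le
  have := tbar_add_card_edgeFinset_turanGraph r (Fintype.card V)
  have := G.card_edgeFinset_add_card_edgeFinset_compl_s8
  omega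

instance colorGraph.instDecidableRelAdj {n k : ℕ} (f : Sym2 (Fin n) → Fin k) (i : Fin k) :
    DecidableRel (colorGraph f i).Adj :=
  fun x y => inferInstanceAs (Decidable (x ≠ y ∧ f s(x, y) = i))

lemma edgeFinset_colorGraph {n k : ℕ} (f : Sym2 (Fin n) → Fin k) (i : Fin k) :
    (colorGraph f i).edgeFinset = {e ∈ (⊤ : SimpleGraph (Fin n)).edgeFinset | f e = i} := by
  ext e
  induction e using Sym2.ind with
  | _ x y =>
    simp only [mem_filter, mem_edgeFinset, mem_edgeSet, top_adj]
    exact Iff.rfl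

lemma sum_card_edgeFinset_colorGraph {n k : ℕ} (f : Sym2 (Fin n) → Fin k) :
    ∑ i, #(colorGraph f i).edgeFinset = n.choose 2 := by
  simp_rw [edgeFinset_colorGraph]
  rw [← card_eq_sum_card_fiberwise fun e _ => mem_univ (f e),
    card_edgeFinset_top_eq_card_choose_two, Fintype.card_fin]

lemma cliqueFree_compl_colorGraph {n k : ℕ} {f : Sym2 (Fin n) → Fin k} {i : Fin k} {m : ℕ}
    (h : ¬HasIndep f i m) : (colorGraph f i)ᶜ.CliqueFree m := by
  intro s hs
  refine h ⟨s, hs.card_eq, fun x hx y hy hxy hfxy => ?_⟩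
  exact (hs.isClique (mem_coe.2 hx) (mem_coe.2 hy) hxy).2 ⟨hxy, hfxy⟩

theorem cRamseyU_le_of_tbar_general (k m n : ℕ) (hm : 3 ≤ m)
    (h : n.choose 2 < k * tbar (m - 1) n) :
    cRamseyU m k ≤ n := by
  refine Nat.sInf_le fun f => ?_
  by_contra! hf
  have hcolor (i : Fin k) : tbar (m - 1) n ≤ #(colorGraph f i).edgeFinset := by
    have hfree : (colorGraph f i)ᶜ.CliqueFree (m - 1 + 1) := by
      rw [Nat.sub_add_cancel (by omega)]
      exact cliqueFree_compl_colorGraph (hf i)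
    simpa using tbar_le_card_edgeFinset_of_cliqueFree_compl hfree
  have hsum := Finset.sum_le_sum fun i (_ : i ∈ univ) => hcolor i
  rw [sum_const, card_univ, Fintype.card_fin, smul_eq_mul, sum_card_edgeFinset_colorGraph] at hsum
  omega

/-- If `k * t̄_{m-1}(n) > n(n-1)/2`, then `R̄(m; k) ≤ n`. -/
theorem cRamseyU_le_of_tbar (k m n : ℕ) (hk : 0 < k) (hm : 3 ≤ m) (hn : 0 < n)
    (h : n.choose 2 < k * tbar (m - 1) n) :
    cRamseyU m k ≤ n :=
  cRamseyU_le_of_tbar_general k m n hm h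
end
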